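/- arXiv:math/0607649 — 3 statements merged into one kernel-verified Lean document; each statement's English description precedes it below -/
import Mathlib

section
/- Let K be a field of characteristic zero, V a formal power series over K, and W a formal power series over K such that W · V' = 1 (product of formal power series, V' the formal derivative of V). Define the operator Y = X ∘ W(D) on polynomials, i.e., Y p = x · (W(D)p). Then for every polynomial p over K, V(D)(Y p) − Y(V(D)p) = p; that is, the commutator [V(D), X W(D)] is the identity operator. -/
/-!
Write `r(D)` for `aeval derivative r` when `r` is a polynomial, so that `r ↦ r(D)` is an algebra
map and the Leibniz rule gives `[r(D), X] = r'(D)`. On polynomials of degree `≤ n` the operator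
`f(D)` equals `(trunc (n+1) f)(D)`, and since `D^(n+1)` kills them only truncations matter; so
`f(D) g(D) = (f g)(D)` and `[f(D), X] = f'(D)` for power series too. Hence
`[V(D), X W(D)] = X [V(D), W(D)] + V'(D) W(D) = (W V')(D) = id`.
-/

open Polynomial PowerSeries

/-- The operator `f(D)` on polynomials: `f(D)p = Σ_k f_k p^{(k)}` (a finite sum). -/
noncomputable def applyD {K : Type*} [Field K] (f : PowerSeries K) (p : K[X]) : K[X] :=
  ∑ k ∈ Finset.range (p.natDegree + 1), (PowerSeries.coeff k f) • (derivative^[k] p)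

local notation "𝔇" => Polynomial.aeval (Polynomial.derivative (R := _))

section CommRing

variable {R : Type*} [CommRing R]

lemma aeval_derivative_apply_eq_zero_of_X_pow_dvd {q p : R[X]} {N : ℕ}
    (hq : Polynomial.X ^ N ∣ q) (hp : p.natDegree < N) : 𝔇 q p = 0 := by
  obtain ⟨r, rfl⟩ := hq
  rw [mul_comm, map_mul, Module.End.mul_apply, map_pow, aeval_X, Module.End.pow_apply,
    iterate_derivative_eq_zero hp, map_zero]

lemma aeval_derivative_trunc_coe_apply (q : R[X]) {p : R[X]} {N : ℕ} (hp : p.natDegree < N) :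
    𝔇 (trunc N (q : PowerSeries R)) p = 𝔇 q p := by
  have hdvd : Polynomial.X ^ N ∣ trunc N (q : PowerSeries R) - q :=
    X_pow_dvd_iff.2 fun d hd => by simp [coeff_trunc, hd]
  rw [← sub_eq_zero, ← LinearMap.sub_apply, ← map_sub]
  exact aeval_derivative_apply_eq_zero_of_X_pow_dvd hdvd hp

lemma aeval_derivative_X_mul (r q : R[X]) :
    𝔇 r (Polynomial.X * q) = Polynomial.X * 𝔇 r q + 𝔇 (derivative r) q := by
  induction r using Polynomial.induction_on' with
  | add r s hr hs => simp only [map_add, LinearMap.add_apply, hr, hs]; ring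
  | monomial n c =>
    simp only [aeval_monomial, derivative_monomial, Module.End.mul_apply, Module.End.pow_apply,
      Module.algebraMap_end_apply, mul_comm Polynomial.X, iterate_derivative_mul_X]
    rw [smul_add, smul_mul_assoc, mul_smul, Nat.cast_smul_eq_nsmul]

end CommRing

section Field

variable {K : Type*} [Field K]

lemma applyD_eq_aeval_trunc (f : PowerSeries K) {p : K[X]} {n : ℕ} (hp : p.natDegree ≤ n) :
    applyD f p = 𝔇 (trunc (n + 1) f) p := by
  rw [aeval_eq_sum_range' (natDegree_trunc_lt f n), LinearMap.sum_apply, applyD]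
  refine Finset.sum_subset (by simpa using hp) (fun k _ hk => ?_) |>.trans
    (Finset.sum_congr rfl fun k hk => ?_)
  · rw [iterate_derivative_eq_zero (by simpa using hk), smul_zero]
  · rw [coeff_trunc, if_pos (Finset.mem_range.1 hk), LinearMap.smul_apply, Module.End.pow_apply]

lemma natDegree_applyD_le (f : PowerSeries K) (p : K[X]) :
    (applyD f p).natDegree ≤ p.natDegree :=
  natDegree_sum_le_of_forall_le _ _ fun k _ =>
    (natDegree_smul_le _ _).trans ((natDegree_iterate_derivative p k).trans (Nat.sub_le _ _))

lemma applyD_applyD (f g : PowerSeries K) (p : K[X]) :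
    applyD f (applyD g p) = applyD (f * g) p := by
  rw [applyD_eq_aeval_trunc f (natDegree_applyD_le g p), applyD_eq_aeval_trunc g le_rfl,
    applyD_eq_aeval_trunc (f * g) le_rfl, ← trunc_trunc_mul_trunc, ← Polynomial.coe_mul,
    aeval_derivative_trunc_coe_apply _ (Nat.lt_succ_self _), map_mul, Module.End.mul_apply]

lemma applyD_one (p : K[X]) : applyD 1 p = p := by
  rw [applyD_eq_aeval_trunc 1 le_rfl, trunc_one, map_one, Module.End.one_apply]

lemma applyD_X_mul (f : PowerSeries K) (q : K[X]) :
    applyD f (Polynomial.X * q) = Polynomial.X * applyD f q + applyD (d⁄dX K f) q := by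
  have hXq : (Polynomial.X * q).natDegree ≤ q.natDegree + 1 := by
    rw [add_comm]; exact natDegree_mul_le.trans (by rw [natDegree_X])
  rw [applyD_eq_aeval_trunc f hXq, applyD_eq_aeval_trunc f (Nat.le_succ q.natDegree),
    applyD_eq_aeval_trunc (d⁄dX K f) le_rfl, trunc_derivative, aeval_derivative_X_mul]

end Field

theorem commutator_VD_Y_eq_id_general {K : Type*} [Field K]
    (V W : PowerSeries K) (hW : W * PowerSeries.derivative K V = 1) (p : K[X]) :
    applyD V (Polynomial.X * applyD W p) - Polynomial.X * applyD W (applyD V p) = p :=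
  calc applyD V (Polynomial.X * applyD W p) - Polynomial.X * applyD W (applyD V p)
      = Polynomial.X * applyD (V * W) p + applyD (d⁄dX K V * W) p
          - Polynomial.X * applyD (W * V) p := by
        rw [applyD_X_mul, applyD_applyD, applyD_applyD, applyD_applyD]
    _ = applyD (W * d⁄dX K V) p := by rw [mul_comm V, mul_comm _ W, add_sub_cancel_left]
    _ = p := by rw [hW, applyD_one]

theorem commutator_VD_Y_eq_id {K : Type*} [Field K] [CharZero K]
    (V W : PowerSeries K) (hW : W * PowerSeries.derivative K V = 1) (p : K[X]) :
    applyD V (Polynomial.X * applyD W p) - Polynomial.X * applyD W (applyD V p) = p :=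
  commutator_VD_Y_eq_id_general V W hW p
end

section
/- Let K be a field of characteristic zero, V a formal power series over K with constant coefficient 0 and coefficient of z equal to 1, and let U be the compositional inverse of V, i.e., the formal power series with constant coefficient 0 satisfying V(U(v)) = v. Let W be the formal power series with W · V' = 1, define Y p = x · (W(D)p) on polynomials, and y_n = Y^n 1. Then for all m, n ≥ 0, m! times the coefficient of x^m in y_n equals n! times the coefficient of v^n in the formal power series U(v)^m. -/
open Polynomial PowerSeries

/-- The raising operator `Y = X ∘ W(D)`. -/
noncomputable def Yop {K : Type*} [Field K] (W : PowerSeries K) (p : K[X]) : K[X] :=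
  Polynomial.X * applyD W p

/-- Composition `g ∘ f` of formal power series, valid when `f` has zero constant term:
the coefficient of `v^n` is `Σ_{k ≤ n} g_k · (coefficient of v^n in f^k)`. -/
noncomputable def psComp {K : Type*} [Field K] (g f : PowerSeries K) : PowerSeries K :=
  PowerSeries.mk fun n =>
    ∑ k ∈ Finset.range (n + 1), PowerSeries.coeff k g * PowerSeries.coeff n (f ^ k)

/-!
Since `V ∘ U = X`, the chain rule gives `(V' ∘ U) · U' = 1`, hence `W ∘ U = U'`. Differentiating
`U^(m+1)` then yields `(n+1) [v^(n+1)] U^(m+1) = (m+1) Σ_k W_k [v^n] U^(m+k)`. On the polynomial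
side, `x^(m+1)` in `Y p` has coefficient `Σ_k W_k (m+k)!/m! · [x^(m+k)] p`, so after normalising by
factorials both families satisfy the same recursion in `n`, and they agree at `n = 0`.
-/

namespace PowerSeries

variable {R : Type*} [CommRing R]

theorem coeff_pow_eq_zero_of_lt {f : R⟦X⟧} (hf : constantCoeff f = 0) {j k : ℕ} (h : j < k) :
    coeff j (f ^ k) = 0 :=
  X_pow_dvd_iff.mp (pow_dvd_pow_of_dvd (X_dvd_iff.mpr hf) k) j h

theorem coeff_subst_eq_sum_range {f : R⟦X⟧} (hf : constantCoeff f = 0) (g : R⟦X⟧)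
    {n N : ℕ} (hn : n < N) :
    coeff n (g.subst f) = ∑ k ∈ Finset.range N, coeff k g * coeff n (f ^ k) := by
  rw [coeff_subst' (HasSubst.of_constantCoeff_zero' hf)]
  refine finsum_eq_sum_of_support_subset _ fun k hk => ?_
  contrapose! hk
  simp [coeff_pow_eq_zero_of_lt hf (hn.trans_le (by simpa using hk))]

theorem coeff_mul_subst_eq_sum_range {f : R⟦X⟧} (hf : constantCoeff f = 0) (g h : R⟦X⟧)
    {n N : ℕ} (hn : n < N) :
    coeff n (h * g.subst f) = ∑ k ∈ Finset.range N, coeff k g * coeff n (h * f ^ k) := by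
  simp only [coeff_mul, Finset.mul_sum]
  rw [Finset.sum_comm]
  refine Finset.sum_congr rfl fun ij hij => ?_
  have hj : ij.2 < N := by
    have := Finset.HasAntidiagonal.mem_antidiagonal.mp hij; omega
  rw [coeff_subst_eq_sum_range hf g hj, Finset.mul_sum]
  exact Finset.sum_congr rfl fun k _ => by ring

theorem subst_eq_derivative_of_subst_eq_X {U V W : R⟦X⟧} (hU : constantCoeff U = 0)
    (hVU : V.subst U = X) (hW : W * d⁄dX R V = 1) :
    W.subst U = d⁄dX R U := by
  have hU' := HasSubst.of_constantCoeff_zero' hU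
  have hchain : (d⁄dX R V).subst U * d⁄dX R U = 1 := by
    rw [← derivative_subst hU', hVU, derivative_X]
  calc W.subst U = (W * d⁄dX R V).subst U * d⁄dX R U := by
        rw [subst_mul hU', mul_assoc, hchain, mul_one]
    _ = d⁄dX R U := by rw [hW, ← coe_substAlgHom hU', map_one, one_mul]

theorem factorial_mul_coeff_succ_pow_succ {U W : R⟦X⟧} (hU : constantCoeff U = 0)
    (hWU : W.subst U = d⁄dX R U) (m : ℕ) {n N : ℕ} (hn : n < N) :
    ((n + 1).factorial : R) * coeff (n + 1) (U ^ (m + 1))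
      = (m + 1) * ∑ k ∈ Finset.range N,
          coeff k W * (n.factorial * coeff n (U ^ (m + k))) := by
  have hderiv : d⁄dX R (U ^ (m + 1)) = (m + 1 : R) • (U ^ m * W.subst U) := by
    rw [derivative_pow, hWU, smul_eq_C_mul]
    simp [mul_assoc]
  calc ((n + 1).factorial : R) * coeff (n + 1) (U ^ (m + 1))
      = n.factorial * coeff n (d⁄dX R (U ^ (m + 1))) := by
        rw [coeff_derivative, Nat.factorial_succ]; push_cast; ring
    _ = (m + 1) * ∑ k ∈ Finset.range N,
          coeff k W * (n.factorial * coeff n (U ^ (m + k))) := by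
        rw [hderiv, map_smul, coeff_mul_subst_eq_sum_range hU W _ hn, smul_eq_mul,
          Finset.mul_sum, Finset.mul_sum, Finset.mul_sum]
        refine Finset.sum_congr rfl fun k _ => ?_
        rw [pow_add]; ring

end PowerSeries

theorem psComp_eq_subst {K : Type*} [Field K] {f : K⟦X⟧} (hf : constantCoeff f = 0) (g : K⟦X⟧) :
    psComp g f = g.subst f := by
  ext n
  rw [psComp, coeff_mk, coeff_subst_eq_sum_range hf g n.lt_succ_self]

theorem coeff_applyD {K : Type*} [Field K] (f : K⟦X⟧) {p : K[X]} {N : ℕ} (hN : p.natDegree < N)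
    (m : ℕ) :
    (applyD f p).coeff m
      = ∑ k ∈ Finset.range N, coeff k f * ((m + k).descFactorial k * p.coeff (m + k)) := by
  rw [applyD, Polynomial.finsetSum_coeff]
  calc _ = ∑ k ∈ Finset.range (p.natDegree + 1),
        coeff k f * ((m + k).descFactorial k * p.coeff (m + k)) :=
        Finset.sum_congr rfl fun k _ => by
          rw [Polynomial.coeff_smul, Polynomial.coeff_iterate_derivative, nsmul_eq_mul,
            smul_eq_mul]
    _ = _ := Finset.sum_subset (Finset.range_subset_range.mpr hN) fun k _ hk => by
          rw [Finset.mem_range, not_lt] at hk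
          rw [Polynomial.coeff_eq_zero_of_natDegree_lt (by omega), mul_zero, mul_zero]

theorem factorial_mul_coeff_Yop_succ {K : Type*} [Field K] (W : K⟦X⟧) {p : K[X]} {N : ℕ}
    (hN : p.natDegree < N) (m : ℕ) :
    ((m + 1).factorial : K) * (Yop W p).coeff (m + 1)
      = (m + 1) * ∑ k ∈ Finset.range N, coeff k W * ((m + k).factorial * p.coeff (m + k)) := by
  rw [Yop, Polynomial.coeff_X_mul, coeff_applyD W hN, Finset.mul_sum, Finset.mul_sum]
  refine Finset.sum_congr rfl fun k _ => ?_
  have hfac : (m.factorial : K) * (m + k).descFactorial k = (m + k).factorial := by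
    rw [Nat.add_descFactorial_eq_ascFactorial, ← Nat.cast_mul, Nat.factorial_mul_ascFactorial]
  rw [Nat.factorial_succ, ← hfac]; push_cast; ring

theorem coeff_canonical_polynomials_eq_inverse_powers_general {K : Type*} [Field K]
    (V U W : PowerSeries K)
    (hU0 : PowerSeries.constantCoeff U = 0)
    (hUV : psComp V U = PowerSeries.X)
    (hW : W * PowerSeries.derivative K V = 1)
    (m n : ℕ) :
    (m.factorial : K) * ((Yop W)^[n] 1).coeff m
      = (n.factorial : K) * PowerSeries.coeff n (U ^ m) := by
  have hWU := subst_eq_derivative_of_subst_eq_X hU0 (psComp_eq_subst hU0 V ▸ hUV) hW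
  induction n generalizing m with
  | zero =>
    cases m with
    | zero => simp
    | succ m => simp [Polynomial.coeff_one, coeff_pow_eq_zero_of_lt hU0 m.succ_pos]
  | succ n ih =>
    rw [Function.iterate_succ_apply']
    cases m with
    | zero => simp [Yop]
    | succ m =>
      set N := n + ((Yop W)^[n] 1).natDegree + 1
      rw [factorial_mul_coeff_Yop_succ W (N := N) (by omega),
        factorial_mul_coeff_succ_pow_succ hU0 hWU m (N := N) (by omega)]
      simp_rw [ih]

theorem coeff_canonical_polynomials_eq_inverse_powers {K : Type*} [Field K] [CharZero K]
    (V U W : PowerSeries K)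
    (hV0 : PowerSeries.constantCoeff V = 0)
    (hV1 : PowerSeries.coeff 1 V = 1)
    (hU0 : PowerSeries.constantCoeff U = 0)
    (hUV : psComp V U = PowerSeries.X)
    (hW : W * PowerSeries.derivative K V = 1)
    (m n : ℕ) :
    (m.factorial : K) * ((Yop W)^[n] 1).coeff m
      = (n.factorial : K) * PowerSeries.coeff n (U ^ m) :=
  coeff_canonical_polynomials_eq_inverse_powers_general V U W hU0 hUV hW m n
end

section
/- Let K be a field of characteristic zero and W a formal power series over K. Define the dual vector field operator Ỹ on formal power series in the variable A over K by Ỹ f = W · f' (product with the formal derivative). Define also Y p = x · (W(D)p) on polynomials and y_n = Y^n 1. Then for all m, n ≥ 0, the constant coefficient of the formal power series Ỹ^n(A^m) equals m! times the coefficient of x^m in y_n. -/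
open Polynomial PowerSeries

/-- The dual vector field `Ỹ f = W · f'` acting on formal power series. -/
noncomputable def Ytilde {K : Type*} [Field K] (W : PowerSeries K) (f : PowerSeries K) :
    PowerSeries K :=
  W * PowerSeries.derivative K f

/-!
Under the pairing `⟨f, p⟩ = Σ_k k! f_k p_k` between `K⟦A⟧` and `K[x]`, multiplication by `W` is
adjoint to `W(D)` and `d/dA` is adjoint to multiplication by `x`; hence `Ỹ = W · d/dA` is adjoint
to `Y = x ∘ W(D)`. The claim is `⟨Ỹⁿ Aᵐ, 1⟩ = ⟨Aᵐ, Yⁿ 1⟩`, since pairing with `1` reads off the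
constant coefficient and pairing with `Aᵐ` reads off `m!` times the coefficient of `xᵐ`.
-/

namespace Polynomial

theorem iterate_derivative_monomial {R : Type*} [Semiring R] (a : R) (t k : ℕ) :
    derivative^[k] (monomial t a) = monomial (t - k) (t.descFactorial k • a) := by
  induction k with
  | zero => simp
  | succ k ih =>
    rw [Function.iterate_succ_apply', ih, derivative_monomial, Nat.sub_sub, Nat.descFactorial_succ,
      mul_comm (t - k), mul_smul, smul_mul_assoc, ← Nat.cast_comm, ← nsmul_eq_mul]

end Polynomial

section

variable {K : Type*} [Field K]

theorem applyD_eq_sum_range (W : PowerSeries K) {p : K[X]} {N : ℕ} (h : p.natDegree < N) :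
    applyD W p = ∑ k ∈ Finset.range N, coeff k W • derivative^[k] p := by
  refine Finset.sum_subset (Finset.range_subset_range.2 h) fun k _ hk => ?_
  rw [iterate_derivative_eq_zero (by simpa using hk), smul_zero]

theorem applyD_add (W : PowerSeries K) (p q : K[X]) :
    applyD W (p + q) = applyD W p + applyD W q := by
  let N := p.natDegree + q.natDegree + (p + q).natDegree + 1
  rw [applyD_eq_sum_range W (N := N) (by omega), applyD_eq_sum_range W (N := N) (by omega),
    applyD_eq_sum_range W (N := N) (by omega), ← Finset.sum_add_distrib]
  simp only [iterate_map_add, smul_add]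

theorem applyD_monomial (W : PowerSeries K) (t : ℕ) (a : K) :
    applyD W (monomial t a) =
      ∑ k ∈ Finset.range (t + 1),
        Polynomial.monomial (t - k) (coeff k W * t.descFactorial k • a) := by
  rw [applyD_eq_sum_range W ((natDegree_monomial_le a).trans_lt t.lt_succ_self)]
  simp only [iterate_derivative_monomial, smul_monomial, smul_eq_mul]

noncomputable def factorialPairing (f : PowerSeries K) : K[X] →ₗ[K] K :=
  Polynomial.lsum fun k => ((k.factorial : K) * coeff k f) • LinearMap.id

theorem factorialPairing_monomial (f : PowerSeries K) (t : ℕ) (a : K) :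
    factorialPairing f (monomial t a) = t.factorial * coeff t f * a := by
  simp [factorialPairing, Polynomial.sum_monomial_index]

theorem factorialPairing_one (f : PowerSeries K) :
    factorialPairing f 1 = constantCoeff f := by
  simpa using factorialPairing_monomial f 0 1

theorem factorialPairing_X_pow (m : ℕ) (p : K[X]) :
    factorialPairing (PowerSeries.X ^ m) p = m.factorial * p.coeff m := by
  induction p using Polynomial.induction_on' with
  | add p q hp hq => rw [map_add, hp, hq, Polynomial.coeff_add, mul_add]
  | monomial t a =>
    rw [factorialPairing_monomial, PowerSeries.coeff_X_pow, Polynomial.coeff_monomial]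
    split_ifs with h <;> simp [h]

theorem factorialPairing_derivative (f : PowerSeries K) (p : K[X]) :
    factorialPairing (PowerSeries.derivative K f) p = factorialPairing f (Polynomial.X * p) := by
  induction p using Polynomial.induction_on' with
  | add p q hp hq => rw [map_add, hp, hq, mul_add, map_add]
  | monomial t a =>
    rw [X_mul_monomial, factorialPairing_monomial, factorialPairing_monomial,
      PowerSeries.coeff_derivative, Nat.factorial_succ]
    push_cast
    ring

theorem factorialPairing_mul (W f : PowerSeries K) (p : K[X]) :
    factorialPairing (W * f) p = factorialPairing f (applyD W p) := by
  induction p using Polynomial.induction_on' with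
  | add p q hp hq => rw [map_add, hp, hq, applyD_add, map_add]
  | monomial t a =>
    rw [factorialPairing_monomial, PowerSeries.coeff_mul,
      Finset.Nat.sum_antidiagonal_eq_sum_range_succ_mk, applyD_monomial, map_sum,
      Finset.mul_sum, Finset.sum_mul]
    refine Finset.sum_congr rfl fun k hk => ?_
    have hfact : ((t - k).factorial * t.descFactorial k : K) = t.factorial := by
      rw [← Nat.cast_mul, Nat.factorial_mul_descFactorial (Finset.mem_range_succ_iff.mp hk)]
    rw [factorialPairing_monomial, nsmul_eq_mul, ← hfact]
    ring

theorem factorialPairing_Ytilde (W f : PowerSeries K) (p : K[X]) :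
    factorialPairing (Ytilde W f) p = factorialPairing f (Yop W p) := by
  rw [Ytilde, factorialPairing_mul, factorialPairing_derivative, Yop]

theorem factorialPairing_iterate_Ytilde (W f : PowerSeries K) (p : K[X]) (n : ℕ) :
    factorialPairing ((Ytilde W)^[n] f) p = factorialPairing f ((Yop W)^[n] p) := by
  induction n generalizing f p with
  | zero => rfl
  | succ n ih =>
    rw [Function.iterate_succ_apply, Function.iterate_succ_apply', ih, factorialPairing_Ytilde]

end

theorem dual_vector_field_matches_raising_general {K : Type*} [Field K]
    (W : PowerSeries K) (m n : ℕ) :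
    PowerSeries.constantCoeff ((Ytilde W)^[n] (PowerSeries.X ^ m))
      = (m.factorial : K) * ((Yop W)^[n] 1).coeff m := by
  rw [← factorialPairing_one, factorialPairing_iterate_Ytilde, factorialPairing_X_pow]

theorem dual_vector_field_matches_raising {K : Type*} [Field K] [CharZero K]
    (W : PowerSeries K) (m n : ℕ) :
    PowerSeries.constantCoeff ((Ytilde W)^[n] (PowerSeries.X ^ m))
      = (m.factorial : K) * ((Yop W)^[n] 1).coeff m :=
  dual_vector_field_matches_raising_general W m n
end
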